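/- arXiv:1811.03463 — 4 statements merged into one kernel-verified Lean document; each statement's English description precedes it below -/
import Mathlib

section
/- Let f : ℝ → ℝ ∪ {−∞} and let g : ℝ → ℝ be concave and continuous. Then the generalized Legendre spectrum L_g(h) := (f + g)⋆⋆(h) − g(h) satisfies f(h) ≤ L_g(h) ≤ f⋆⋆(h) for every h ∈ ℝ (where both transforms are taken with the same constant d and f, f+g are each dominated by an affine function). -/
/-!
Lower bound: every `F : ℝ → EReal` satisfies `F ≤ F⋆⋆`, and `g` is finite, so it can be
subtracted. Upper bound: `f⋆⋆` dominates the infimum of the affine majorants `ℓ` of `f`. For each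
such `ℓ`, the real function `ℓ + g` majorizes `f + g` and, being concave, has a supporting line at
every point, which forces `(ℓ + g)⋆⋆ ≤ ℓ + g`; hence `(f + g)⋆⋆ - g ≤ ℓ`.
-/

open Filter Set

noncomputable def legStar (d : ℝ) (f : ℝ → EReal) (q : ℝ) : EReal :=
  ⨅ h : ℝ, ((d + q * h : ℝ) : EReal) - f h

noncomputable def legStar2 (d : ℝ) (f : ℝ → EReal) (x : ℝ) : EReal :=
  ⨅ q : ℝ, ((d + q * x : ℝ) : EReal) - legStar d f q

noncomputable def concEnv (f : ℝ → EReal) (x : ℝ) : EReal :=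
  ⨅ p : {p : ℝ × ℝ // ∀ t, f t ≤ ((p.1 * t + p.2 : ℝ) : EReal)},
    ((p.1.1 * x + p.1.2 : ℝ) : EReal)

namespace EReal

lemma le_coe_sub_comm {a : ℝ} {x y : EReal} (h : x ≤ a - y) : y ≤ a - x := by
  rw [le_sub_iff_add_le (.inr (coe_ne_bot a)) (.inr (coe_ne_top a))] at h ⊢
  rwa [add_comm]

lemma le_coe_sub_of_forall_coe_le {a : ℝ} {x y : EReal}
    (h : ∀ c : ℝ, (c : EReal) ≤ y → x ≤ a - c) : x ≤ a - y := by
  induction y with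
  | bot => simp
  | coe y => exact h y le_rfl
  | top =>
    rw [sub_top, le_bot_iff, eq_bot_iff_forall_lt]
    intro z
    refine (h (a - z + 1) le_top).trans_lt ?_
    rw [← coe_sub]
    exact_mod_cast (by linarith : a - (a - z + 1) < z)

end EReal

lemma ConcaveOn.exists_forall_le_add_mul_sub {S : Set ℝ} {g : ℝ → ℝ} {x : ℝ}
    (hg : ConcaveOn ℝ S g) (hx : x ∈ interior S) :
    ∃ p : ℝ, ∀ t ∈ S, g t ≤ g x + p * (t - x) := by
  have hneg : ConvexOn ℝ S (-g) := hg.neg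
  refine ⟨-derivWithin (-g) (Ioi x) x, fun t ht => ?_⟩
  rcases lt_trichotomy t x with htx | rfl | hxt
  · have hslope := (hneg.slope_le_leftDeriv_of_mem_interior ht hx htx).trans
      (hneg.leftDeriv_le_rightDeriv_of_mem_interior hx)
    rw [slope_def_field, div_le_iff₀ (sub_pos.2 htx)] at hslope
    simp only [Pi.neg_apply] at hslope
    linarith
  · simp
  · have hslope := hneg.rightDeriv_le_slope_of_mem_interior hx ht hxt
    rw [slope_def_field, le_div_iff₀ (sub_pos.2 hxt)] at hslope
    simp only [Pi.neg_apply] at hslope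
    linarith

lemma le_affine_of_coe_le_legStar {d q c : ℝ} {f : ℝ → EReal} (hc : (c : EReal) ≤ legStar d f q)
    (t : ℝ) : f t ≤ ((q * t + (d - c) : ℝ) : EReal) := by
  have := EReal.le_coe_sub_comm (hc.trans (iInf_le _ t))
  rwa [← EReal.coe_sub, show d + q * t - c = q * t + (d - c) by ring] at this

lemma concEnv_le_legStar2 (d : ℝ) (f : ℝ → EReal) (x : ℝ) : concEnv f x ≤ legStar2 d f x :=
  le_iInf fun q => EReal.le_coe_sub_of_forall_coe_le fun c hc =>
    (iInf_le _ ⟨(q, d - c), le_affine_of_coe_le_legStar hc⟩).trans_eq <| by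
      rw [← EReal.coe_sub]; ring_nf

lemma le_legStar2 (d : ℝ) (f : ℝ → EReal) (x : ℝ) : f x ≤ legStar2 d f x :=
  le_iInf fun _ => EReal.le_coe_sub_comm (iInf_le _ x)

lemma legStar2_mono (d : ℝ) {f g : ℝ → EReal} (hfg : f ≤ g) : legStar2 d f ≤ legStar2 d g :=
  fun _ => iInf_mono fun _ => EReal.sub_le_sub le_rfl <|
    iInf_mono fun t => EReal.sub_le_sub le_rfl (hfg t)

lemma legStar2_coe_le_of_forall_le_add_mul_sub (d : ℝ) {φ : ℝ → ℝ} {x p : ℝ}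
    (hp : ∀ t, φ t ≤ φ x + p * (t - x)) : legStar2 d (fun t => (φ t : EReal)) x ≤ φ x := by
  have hstar : ((d + p * x - φ x : ℝ) : EReal) ≤ legStar d (fun t => (φ t : EReal)) p := by
    refine le_iInf fun t => ?_
    rw [← EReal.coe_sub, EReal.coe_le_coe_iff]
    linarith [hp t]
  calc legStar2 d (fun t => (φ t : EReal)) x
      ≤ ((d + p * x : ℝ) : EReal) - legStar d (fun t => (φ t : EReal)) p := iInf_le _ p
    _ ≤ ((d + p * x : ℝ) : EReal) - ((d + p * x - φ x : ℝ) : EReal) :=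
        EReal.sub_le_sub le_rfl hstar
    _ = φ x := by rw [← EReal.coe_sub, sub_sub_cancel]

lemma legStar2_add_sub_le_concEnv (d : ℝ) (f : ℝ → EReal) {g : ℝ → ℝ}
    (hg : ConcaveOn ℝ univ g) (x : ℝ) :
    legStar2 d (fun t => f t + (g t : EReal)) x - (g x : EReal) ≤ concEnv f x := by
  obtain ⟨p, hp⟩ := hg.exists_forall_le_add_mul_sub (x := x) (by simp)
  refine le_iInf fun ⟨(a, b), hab⟩ => EReal.sub_le_of_le_add ?_
  have hmajor : (fun t => f t + (g t : EReal)) ≤ fun t => ((a * t + b + g t : ℝ) : EReal) :=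
    fun t => (add_le_add_left (hab t) _).trans_eq (EReal.coe_add _ _).symm
  calc legStar2 d (fun t => f t + (g t : EReal)) x
      ≤ legStar2 d (fun t => ((a * t + b + g t : ℝ) : EReal)) x := legStar2_mono d hmajor x
    _ ≤ ((a * x + b + g x : ℝ) : EReal) :=
        legStar2_coe_le_of_forall_le_add_mul_sub d (p := a + p) fun t => by
          linarith [hp t (mem_univ t)]
    _ = ((a * x + b : ℝ) : EReal) + (g x : EReal) := EReal.coe_add _ _

theorem generalized_legendre_spectrum_sandwich_general (d : ℝ) (f : ℝ → EReal)
    (g : ℝ → ℝ)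
    (hgconc : ConcaveOn ℝ Set.univ g) :
    ∀ h : ℝ,
      f h ≤ legStar2 d (fun t => f t + (g t : EReal)) h - (g h : EReal) ∧
      legStar2 d (fun t => f t + (g t : EReal)) h - (g h : EReal) ≤ legStar2 d f h := by
  intro x
  refine ⟨?_, (legStar2_add_sub_le_concEnv d f hgconc x).trans (concEnv_le_legStar2 d f x)⟩
  rw [EReal.le_sub_iff_add_le (.inl (EReal.coe_ne_bot _)) (.inl (EReal.coe_ne_top _))]
  exact le_legStar2 d (fun t => f t + (g t : EReal)) x

/-- f ≤ L_g = (f+g)⋆⋆ − g ≤ f⋆⋆ for concave continuous real g. -/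
theorem generalized_legendre_spectrum_sandwich (d : ℝ) (f : ℝ → EReal)
    (hf : ∀ h, f h ≠ ⊤) (g : ℝ → ℝ)
    (hgconc : ConcaveOn ℝ Set.univ g) (hgcont : Continuous g)
    (hfdom : ∃ α β : ℝ, ∀ h, f h ≤ ((α * h + β : ℝ) : EReal))
    (hfgdom : ∃ α β : ℝ, ∀ h, f h + (g h : EReal) ≤ ((α * h + β : ℝ) : EReal)) :
    ∀ h : ℝ,
      f h ≤ legStar2 d (fun t => f t + (g t : EReal)) h - (g h : EReal) ∧
      legStar2 d (fun t => f t + (g t : EReal)) h - (g h : EReal) ≤ legStar2 d f h :=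
  generalized_legendre_spectrum_sandwich_general d f g hgconc
end

section
/- Let D : ℝ → ℝ ∪ {−∞} be the double parabola D(h) = 1 − (h+1)² on (−2, 0), D(h) = 1 − (h−1)² on [0, 2], −∞ elsewhere, and for γ ≥ 0 let g_γ(h) = −γ·h². Then the generalized Legendre spectrum L_{g_γ}(h) = (D + g_γ)⋆⋆(h) − g_γ(h) is given by: 1 − (h+1)² for −2 < h < −1/(1+γ); 1/(1+γ) + γ·h² for |h| ≤ 1/(1+γ); and 1 − (h−1)² for 1/(1+γ) < h < 2. -/
open Filter Set

noncomputable def doubleParabola : ℝ → EReal := fun h =>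
  if -2 < h ∧ h < 0 then ((1 - (h + 1)^2 : ℝ) : EReal)
  else if 0 ≤ h ∧ h ≤ 2 then ((1 - (h - 1)^2 : ℝ) : EReal)
  else ⊥

/-!
On its domain `(-2, 2]` the double parabola is `D h = 2|h| - h²`, so with `k = 1 + γ` the lifted
function `D + g_γ` is `2|h| - k h²` there and `⊥` elsewhere. Each branch `±2h - k h²` is a concave
parabola with maximum `1/k` at `±1/k`. For `|h| ≥ 1/k` the tangent line to the branch through `h`
also lies above the other branch (AM–GM), so the envelope equals the function there; for
`|h| ≤ 1/k` the envelope is the horizontal line `1/k` through the two maxima.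
-/

section ConcaveEnvelope

variable (F : ℝ → EReal)

theorem le_concEnv (x : ℝ) : F x ≤ concEnv F x :=
  le_iInf fun p => p.2 x

theorem concEnv_le_of_majorant {m c : ℝ} (hmaj : ∀ t, F t ≤ ((m * t + c : ℝ) : EReal)) (x : ℝ) :
    concEnv F x ≤ ((m * x + c : ℝ) : EReal) :=
  iInf_le (fun p : {p : ℝ × ℝ // ∀ t, F t ≤ ((p.1 * t + p.2 : ℝ) : EReal)} =>
    ((p.1.1 * x + p.1.2 : ℝ) : EReal)) ⟨(m, c), hmaj⟩

theorem concEnv_eq_of_tangent {m c x : ℝ} (hmaj : ∀ t, F t ≤ ((m * t + c : ℝ) : EReal))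
    (hx : F x = ((m * x + c : ℝ) : EReal)) : concEnv F x = ((m * x + c : ℝ) : EReal) :=
  le_antisymm (concEnv_le_of_majorant F hmaj x) (hx ▸ le_concEnv F x)

theorem le_concEnv_of_le_of_le {a b x v : ℝ} (hax : a ≤ x) (hxb : x ≤ b)
    (ha : (v : EReal) ≤ F a) (hb : (v : EReal) ≤ F b) : (v : EReal) ≤ concEnv F x := by
  refine le_iInf fun ⟨⟨m, c⟩, hmaj⟩ => ?_
  have hva : v ≤ m * a + c := EReal.coe_le_coe_iff.mp (ha.trans (hmaj a))
  have hvb : v ≤ m * b + c := EReal.coe_le_coe_iff.mp (hb.trans (hmaj b))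
  refine EReal.coe_le_coe_iff.mpr ?_
  rcases le_total 0 m with hm | hm
  · nlinarith [mul_le_mul_of_nonneg_left hax hm]
  · nlinarith [mul_le_mul_of_nonpos_left hxb hm]

end ConcaveEnvelope

theorem doubleParabola_eq {h : ℝ} (h₁ : -2 < h) (h₂ : h ≤ 2) :
    doubleParabola h = ((2 * |h| - h ^ 2 : ℝ) : EReal) := by
  unfold doubleParabola
  rcases lt_or_ge h 0 with hneg | hnonneg
  · rw [if_pos ⟨h₁, hneg⟩, abs_of_neg hneg]
    congr 1
    ring
  · rw [if_neg fun hh => (hnonneg.not_gt hh.2), if_pos ⟨hnonneg, h₂⟩, abs_of_nonneg hnonneg]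
    congr 1
    ring

theorem doubleParabola_le (h : ℝ) : doubleParabola h ≤ ((2 * |h| - h ^ 2 : ℝ) : EReal) := by
  by_cases hdom : -2 < h ∧ h ≤ 2
  · exact (doubleParabola_eq hdom.1 hdom.2).le
  · have hleft : ¬(-2 < h ∧ h < 0) := fun hh => hdom ⟨hh.1, by linarith [hh.2]⟩
    have hright : ¬(0 ≤ h ∧ h ≤ 2) := fun hh => hdom ⟨by linarith [hh.1], hh.2⟩
    simp only [doubleParabola, if_neg hleft, if_neg hright, bot_le]

/-- `f + g_γ` for the parabolic lifting function `g_γ h = -γ h²`. -/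
noncomputable def parabolicLift (f : ℝ → EReal) (γ : ℝ) : ℝ → EReal :=
  fun x => f x + ((-γ * x ^ 2 : ℝ) : EReal)

theorem parabolicLift_doubleParabola_eq (γ : ℝ) {h : ℝ} (h₁ : -2 < h) (h₂ : h ≤ 2) :
    parabolicLift doubleParabola γ h = ((2 * |h| - (1 + γ) * h ^ 2 : ℝ) : EReal) := by
  rw [parabolicLift, doubleParabola_eq h₁ h₂, ← EReal.coe_add]
  congr 1
  ring

theorem parabolicLift_doubleParabola_le (γ h : ℝ) :
    parabolicLift doubleParabola γ h ≤ ((2 * |h| - (1 + γ) * h ^ 2 : ℝ) : EReal) := by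
  calc parabolicLift doubleParabola γ h
      ≤ ((2 * |h| - h ^ 2 : ℝ) : EReal) + ((-γ * h ^ 2 : ℝ) : EReal) :=
        add_le_add_left (doubleParabola_le h) _
    _ = ((2 * |h| - (1 + γ) * h ^ 2 : ℝ) : EReal) := by
        rw [← EReal.coe_add]
        congr 1
        ring

theorem two_abs_sub_mul_sq_le_inv {k : ℝ} (hk : 0 < k) (t : ℝ) : 2 * |t| - k * t ^ 2 ≤ 1 / k := by
  have hsq : (2 * |t| - k * t ^ 2) * k = 1 - (k * |t| - 1) ^ 2 := by rw [← sq_abs t]; ring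
  rw [le_div_iff₀ hk, hsq]
  linarith [sq_nonneg (k * |t| - 1)]

theorem exists_tangent_two_abs_sub_mul_sq {k h : ℝ} (hkh : 1 ≤ k * |h|) :
    ∃ m c : ℝ, (∀ t, 2 * |t| - k * t ^ 2 ≤ m * t + c) ∧ m * h + c = 2 * |h| - k * h ^ 2 := by
  rcases lt_trichotomy h 0 with hneg | rfl | hpos
  · rw [abs_of_neg hneg] at hkh ⊢
    refine ⟨-2 - 2 * k * h, k * h ^ 2, fun t => ?_, by ring⟩
    rcases le_total t 0 with ht | ht
    · rw [abs_of_nonpos ht]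
      nlinarith [sq_nonneg (t - h)]
    · rw [abs_of_nonneg ht]
      nlinarith [sq_nonneg (t + h), mul_nonneg ht (sub_nonneg.mpr hkh)]
  · norm_num at hkh
  · rw [abs_of_pos hpos] at hkh ⊢
    refine ⟨2 - 2 * k * h, k * h ^ 2, fun t => ?_, by ring⟩
    rcases le_total t 0 with ht | ht
    · rw [abs_of_nonpos ht]
      nlinarith [sq_nonneg (t + h), mul_nonneg (neg_nonneg.mpr ht) (sub_nonneg.mpr hkh)]
    · rw [abs_of_nonneg ht]
      nlinarith [sq_nonneg (t - h)]

section Envelope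

variable {γ : ℝ} (hγ : 0 ≤ γ)
include hγ

theorem concEnv_parabolicLift_doubleParabola_of_abs_le {h : ℝ} (hh : |h| ≤ 1 / (1 + γ)) :
    concEnv (parabolicLift doubleParabola γ) h = ((1 / (1 + γ) : ℝ) : EReal) := by
  have hk : 0 < 1 + γ := by linarith
  set a := 1 / (1 + γ) with ha
  have ha_pos : 0 < a := by positivity
  have ha_le : a ≤ 1 := by rw [ha, div_le_one hk]; linarith
  have hpeak : 2 * a - (1 + γ) * a ^ 2 = a := by rw [ha]; field_simp; ring
  have hmaj (t : ℝ) : parabolicLift doubleParabola γ t ≤ ((0 * t + a : ℝ) : EReal) :=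
    (parabolicLift_doubleParabola_le γ t).trans
      (EReal.coe_le_coe_iff.mpr (by rw [zero_mul, zero_add]; exact two_abs_sub_mul_sq_le_inv hk t))
  refine le_antisymm (by simpa using concEnv_le_of_majorant _ hmaj h) ?_
  obtain ⟨hl, hr⟩ := abs_le.mp hh
  refine le_concEnv_of_le_of_le _ hl hr ?_ ?_
  · rw [parabolicLift_doubleParabola_eq γ (by linarith) (by linarith), abs_neg, abs_of_pos ha_pos,
      neg_sq, hpeak]
  · rw [parabolicLift_doubleParabola_eq γ (by linarith) (by linarith), abs_of_pos ha_pos, hpeak]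

theorem concEnv_parabolicLift_doubleParabola_of_le_abs {h : ℝ} (h₁ : -2 < h) (h₂ : h ≤ 2)
    (hh : 1 / (1 + γ) ≤ |h|) :
    concEnv (parabolicLift doubleParabola γ) h = ((2 * |h| - (1 + γ) * h ^ 2 : ℝ) : EReal) := by
  have hk : 0 < 1 + γ := by linarith
  obtain ⟨m, c, hmaj, htan⟩ :=
    exists_tangent_two_abs_sub_mul_sq (by rwa [div_le_iff₀' hk] at hh)
  rw [← htan]
  refine concEnv_eq_of_tangent _ (fun t => ?_) ?_
  · exact (parabolicLift_doubleParabola_le γ t).trans (EReal.coe_le_coe_iff.mpr (hmaj t))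
  · rw [htan, parabolicLift_doubleParabola_eq γ h₁ h₂]

end Envelope

/-- closed form of the generalized Legendre spectrum of the double
parabola for the parabolic lift g_γ(h) = −γh². -/
theorem generalized_spectrum_double_parabola (γ : ℝ) (hγ : 0 ≤ γ) :
    ∀ h : ℝ,
      (-2 < h ∧ h < -(1 / (1 + γ)) →
        concEnv (fun x => doubleParabola x + ((-γ * x^2 : ℝ) : EReal)) h
          - ((-γ * h^2 : ℝ) : EReal) = ((1 - (h + 1)^2 : ℝ) : EReal)) ∧
      (|h| ≤ 1 / (1 + γ) →
        concEnv (fun x => doubleParabola x + ((-γ * x^2 : ℝ) : EReal)) h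
          - ((-γ * h^2 : ℝ) : EReal) = ((1 / (1 + γ) + γ * h^2 : ℝ) : EReal)) ∧
      (1 / (1 + γ) < h ∧ h < 2 →
        concEnv (fun x => doubleParabola x + ((-γ * x^2 : ℝ) : EReal)) h
          - ((-γ * h^2 : ℝ) : EReal) = ((1 - (h - 1)^2 : ℝ) : EReal)) := by
  have ha_pos : 0 < 1 / (1 + γ) := one_div_pos.mpr (by linarith)
  intro h
  change (_ → concEnv (parabolicLift doubleParabola γ) h - _ = _) ∧
    (_ → concEnv (parabolicLift doubleParabola γ) h - _ = _) ∧
    (_ → concEnv (parabolicLift doubleParabola γ) h - _ = _)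
  refine ⟨fun ⟨h₁, h₂⟩ => ?_, fun hh => ?_, fun ⟨h₁, h₂⟩ => ?_⟩
  · have hneg : h < 0 := by linarith
    rw [concEnv_parabolicLift_doubleParabola_of_le_abs hγ h₁ (by linarith)
      (by rw [abs_of_neg hneg]; linarith), ← EReal.coe_sub, abs_of_neg hneg]
    congr 1
    ring
  · rw [concEnv_parabolicLift_doubleParabola_of_abs_le hγ hh, ← EReal.coe_sub]
    congr 1
    ring
  · have hpos : 0 < h := by linarith
    rw [concEnv_parabolicLift_doubleParabola_of_le_abs hγ (by linarith) h₂.le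
      (by rw [abs_of_pos hpos]; linarith), ← EReal.coe_sub, abs_of_pos hpos]
    congr 1
    ring
end

section
/- Let D : ℝ → ℝ ∪ {−∞} be upper semicontinuous, bounded above by a constant d ∈ ℝ, and not identically −∞. Let g : ℝ → ℝ ∪ {−∞} be continuous on an interval I of nonempty interior where it is finite, with g(x) → −∞ as x → ±∞, g ≤ 0, and sup g = 0 attained. For h₀ ∈ ℝ with D(h₀) ≥ 0 and for every ε > 0, there exist γ > 0 and δ ∈ ℝ such that the translated-dilated lift g_{γ,δ}(x) = g(γ·(x − δ)) satisfies: the function D + g_{γ,δ} is everywhere ≤ D(h₀) + ε, and hence its concave envelope evaluated at h₀ minus g_{γ,δ}(h₀) lies in [D(h₀), D(h₀) + ε + |g_{γ,δ}(h₀)|]. -/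
open Filter Set

/-- core step of the proof of Theorem 1 — a suitable translate-dilate
of an admissible g makes D + g_{γ,δ} everywhere ≤ D(h₀) + ε, and the corresponding
generalized Legendre spectrum at h₀ lies in [D(h₀), D(h₀) + ε + |g_{γ,δ}(h₀)|]. -/
theorem admissible_lift_localizes (D : ℝ → EReal) (d : ℝ)
    (husc : UpperSemicontinuous D) (hbd : ∀ h, D h ≤ (d : EReal))
    (hne : ∃ h, D h ≠ ⊥)
    (g : ℝ → EReal)
    (hI : ∃ a b : ℝ, a < b ∧ (∀ x ∈ Set.Icc a b, g x ≠ ⊥) ∧ ContinuousOn g (Set.Icc a b))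
    (htop : Filter.Tendsto g Filter.atTop (nhds ⊥))
    (hbot : Filter.Tendsto g Filter.atBot (nhds ⊥))
    (hgle : ∀ x, g x ≤ 0) (hgmax : ∃ x, g x = 0) :
    ∀ h₀ : ℝ, 0 ≤ D h₀ → ∀ ε : ℝ, 0 < ε →
      ∃ γ : ℝ, 0 < γ ∧ ∃ δ : ℝ,
        (∀ x : ℝ, D x + g (γ * (x - δ)) ≤ D h₀ + (ε : EReal)) ∧
        D h₀ ≤ concEnv (fun x => D x + g (γ * (x - δ))) h₀ - g (γ * (h₀ - δ)) ∧
        concEnv (fun x => D x + g (γ * (x - δ))) h₀ - g (γ * (h₀ - δ))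
          ≤ D h₀ + (ε : EReal) - g (γ * (h₀ - δ)) := by

  obtain ⟨x₀, hx₀⟩ := hgmax
  intro h₀ hD0 ε hε
  have hDtop : D h₀ ≠ ⊤ := ((hbd h₀).trans_lt (EReal.coe_lt_top d)).ne
  have hDbot : D h₀ ≠ ⊥ := (lt_of_lt_of_le (by simp : (⊥ : EReal) < 0) hD0).ne'
  set r : ℝ := (D h₀).toReal with hrdef
  have hr : D h₀ = (r : EReal) := (EReal.coe_toReal hDtop hDbot).symm
  have hr0 : 0 ≤ r := by
    have := hD0; rw [hr] at this; exact_mod_cast this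
  -- upper semicontinuity near h₀
  have husc' : ∀ᶠ y in nhds h₀, D y < ((r + ε : ℝ) : EReal) := by
    apply husc h₀
    rw [hr]; exact_mod_cast (by linarith : r < r + ε)
  obtain ⟨δ₀, hδ₀, hball⟩ := Metric.eventually_nhds_iff.mp husc'
  -- tails of g
  have hbotlt : (⊥ : EReal) < ((ε - d : ℝ) : EReal) := bot_lt_iff_ne_bot.mpr (EReal.coe_ne_bot _)
  obtain ⟨M, hM⟩ := (Filter.eventually_atTop).mp (htop.eventually_lt_const hbotlt)
  obtain ⟨M', hM'⟩ := (Filter.eventually_atBot).mp (hbot.eventually_lt_const hbotlt)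
  -- choose γ and δ
  set γ : ℝ := (1 + |x₀| + |M| + |M'|) / δ₀ with hγdef
  have hγpos : 0 < γ := by
    apply div_pos _ hδ₀
    have := abs_nonneg x₀; have := abs_nonneg M; have := abs_nonneg M'; linarith
  have hγne : γ ≠ 0 := hγpos.ne'
  have hγδ : γ * δ₀ = 1 + |x₀| + |M| + |M'| := by
    rw [hγdef]; field_simp
  have harg : ∀ x : ℝ, γ * (x - (h₀ - x₀ / γ)) = γ * (x - h₀) + x₀ := by
    intro x; field_simp; ring
  have hargh₀ : γ * (h₀ - (h₀ - x₀ / γ)) = x₀ := by field_simp; ring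
  have hmain : ∀ x : ℝ, D x + g (γ * (x - (h₀ - x₀ / γ))) ≤ ((r + ε : ℝ) : EReal) := by
    intro x
    rcases lt_or_ge (dist x h₀) δ₀ with hx | hx
    · calc D x + g (γ * (x - (h₀ - x₀ / γ))) ≤ D x + 0 := add_le_add_right (hgle _) _
        _ = D x := add_zero _
        _ ≤ _ := (hball hx).le
    · have hout : g (γ * (x - (h₀ - x₀ / γ))) ≤ ((ε - d : ℝ) : EReal) := by
        rw [harg]
        rw [Real.dist_eq] at hx
        rcases le_abs.mp hx with h | h
        · apply le_of_lt; apply hM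
          have hmul := mul_le_mul_of_nonneg_left h hγpos.le
          have := le_abs_self M; have := neg_abs_le x₀; have := abs_nonneg M'
          linarith
        · apply le_of_lt; apply hM'
          have hmul := mul_le_mul_of_nonneg_left h hγpos.le
          have := le_abs_self x₀; have := neg_abs_le M'; have := abs_nonneg M
          linarith
      calc D x + g (γ * (x - (h₀ - x₀ / γ))) ≤ ((d : ℝ) : EReal) + ((ε - d : ℝ) : EReal) :=
            add_le_add (hbd x) hout
        _ = ((ε : ℝ) : EReal) := by rw [← EReal.coe_add]; norm_num
        _ ≤ ((r + ε : ℝ) : EReal) := by exact_mod_cast (by linarith : ε ≤ r + ε)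
  refine ⟨γ, hγpos, h₀ - x₀ / γ, ?_, ?_, ?_⟩
  · intro x
    rw [hr, ← EReal.coe_add]
    exact hmain x
  · rw [hargh₀, hx₀, sub_zero]
    calc D h₀ = D h₀ + g (γ * (h₀ - (h₀ - x₀ / γ))) := by rw [hargh₀, hx₀, add_zero]
      _ ≤ concEnv (fun x => D x + g (γ * (x - (h₀ - x₀ / γ)))) h₀ :=
          le_iInf fun p => p.2 h₀
  · rw [hargh₀, hx₀, sub_zero, sub_zero, hr, ← EReal.coe_add]
    have hmaj : ∀ t : ℝ, D t + g (γ * (t - (h₀ - x₀ / γ)))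
        ≤ (((0 : ℝ) * t + (r + ε) : ℝ) : EReal) := by
      intro t; simpa using hmain t
    calc concEnv (fun x => D x + g (γ * (x - (h₀ - x₀ / γ)))) h₀
        ≤ (((0 : ℝ) * h₀ + (r + ε) : ℝ) : EReal) := by
          unfold concEnv
          exact iInf_le (fun p : {p : ℝ × ℝ // ∀ t, (fun x => D x + g (γ * (x - (h₀ - x₀ / γ)))) t ≤ ((p.1 * t + p.2 : ℝ) : EReal)} => ((p.1.1 * h₀ + p.1.2 : ℝ) : EReal)) ⟨(0, r + ε), hmaj⟩
      _ = ((r + ε : ℝ) : EReal) := by norm_num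
end

section
/- Let f : ℝ → ℝ ∪ {−∞} be dominated by an affine function and let g : ℝ → ℝ be concave and continuous. Then for all h ∈ ℝ, (f + g)⋆⋆(h) ≤ f⋆⋆(h) + g(h); equivalently, the generalized Legendre spectrum L_g = (f+g)⋆⋆ − g never exceeds the classical Legendre spectrum f⋆⋆. -/
open Filter Set

/-! For an affine majorant `ℓ` of `f`, the function `ℓ + g` is concave and real-valued, so it has a
supporting line at `h`; that line is an affine majorant of `f + g` whose value at `h` is
`ℓ h + g h`. Taking the infimum over `ℓ` gives the inequality. -/

-- A convex function on `ℝ` is right-differentiable, so this `derivWithin` is not a junk value.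
lemma ConvexOn.add_rightDeriv_mul_sub_le {ψ : ℝ → ℝ} (hψ : ConvexOn ℝ univ ψ) (x t : ℝ) :
    ψ x + derivWithin ψ (Ioi x) x * (t - x) ≤ ψ t := by
  have hx : x ∈ interior univ := by simp
  rcases lt_trichotomy t x with htx | rfl | hxt
  · have hslope : slope ψ t x ≤ derivWithin ψ (Ioi x) x :=
      (hψ.slope_le_leftDeriv_of_mem_interior (mem_univ t) hx htx).trans
        (hψ.leftDeriv_le_rightDeriv_of_mem_interior hx)
    rw [slope_def_field, div_le_iff₀ (sub_pos.mpr htx)] at hslope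
    linarith
  · simp
  · have hslope : derivWithin ψ (Ioi x) x ≤ slope ψ x t :=
      hψ.rightDeriv_le_slope_of_mem_interior hx (mem_univ t) hxt
    rw [slope_def_field, le_div_iff₀ (sub_pos.mpr hxt)] at hslope
    linarith

lemma ConcaveOn.exists_le_add_mul_sub {φ : ℝ → ℝ} (hφ : ConcaveOn ℝ univ φ) (x : ℝ) :
    ∃ c : ℝ, ∀ t, φ t ≤ φ x + c * (t - x) :=
  ⟨-derivWithin (-φ) (Ioi x) x, fun t => by
    have := hφ.neg.add_rightDeriv_mul_sub_le x t
    simp only [Pi.neg_apply] at this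
    linarith⟩

lemma concEnv_le_of_le_concaveOn {u : ℝ → EReal} {φ : ℝ → ℝ} (hφ : ConcaveOn ℝ univ φ)
    (hu : ∀ t, u t ≤ φ t) (x : ℝ) : concEnv u x ≤ φ x := by
  obtain ⟨c, hc⟩ := hφ.exists_le_add_mul_sub x
  have hmaj : ∀ t, u t ≤ ((c * t + (φ x - c * x) : ℝ) : EReal) := fun t =>
    (hu t).trans (EReal.coe_le_coe_iff.mpr (by linarith [hc t]))
  exact iInf_le_of_le ⟨(c, φ x - c * x), hmaj⟩ (by simp)

theorem generalized_spectrum_le_legendre_general (f : ℝ → EReal)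
    (g : ℝ → ℝ) (hgconc : ConcaveOn ℝ Set.univ g) :
    ∀ h : ℝ,
      concEnv (fun t => f t + (g t : EReal)) h ≤ concEnv f h + (g h : EReal) := by
  intro h
  rw [← EReal.sub_le_iff_le_add (.inl (EReal.coe_ne_bot _)) (.inl (EReal.coe_ne_top _))]
  refine le_iInf fun ⟨(a, b), hab⟩ => ?_
  rw [EReal.sub_le_iff_le_add (.inl (EReal.coe_ne_bot _)) (.inl (EReal.coe_ne_top _)),
    ← EReal.coe_add]
  have hconc : ConcaveOn ℝ univ (fun t => a * t + b + g t) :=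
    (((LinearMap.mul ℝ ℝ a).concaveOn convex_univ).add (concaveOn_const b convex_univ)).add
      hgconc
  refine concEnv_le_of_le_concaveOn hconc (fun t => ?_) h
  rw [EReal.coe_add]
  exact add_le_add_left (hab t) _

/-- (f + g)⋆⋆ ≤ f⋆⋆ + g for concave continuous real g. -/
theorem generalized_spectrum_le_legendre (f : ℝ → EReal)
    (hdom : ∃ α β : ℝ, ∀ h, f h ≤ ((α * h + β : ℝ) : EReal))
    (g : ℝ → ℝ) (hgconc : ConcaveOn ℝ Set.univ g) (hgcont : Continuous g) :
    ∀ h : ℝ,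
      concEnv (fun t => f t + (g t : EReal)) h ≤ concEnv f h + (g h : EReal) :=
  generalized_spectrum_le_legendre_general f g hgconc
end
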